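/- (At most |V| Bellman–Ford iterations are needed for graph distance, since only simple paths matter.) For all vertices u, v : V, the infimum of total length over all walks of any length equals the infimum restricted to walks of length at most Fintype.card V - 1: ⨅_{k : ℕ} ⨅ over all walks p of length k from u to v of ∑_{i=0}^{k-1} w (p i) (p (i+1)) = ⨅_{k ∈ Finset.range (Fintype.card V)} ⨅ over all walks p of length k from u to v of ∑_{i=0}^{k-1} w (p i) (p (i+1)). -/

import Mathlib

open ENNReal Finset

/-! A walk that visits some vertex twice contains a closed subwalk; cutting it out gives a shorter
walk with the same endpoints, and since lengths are nonnegative its length does not increase.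
A walk with at least `Fintype.card V` steps visits more than `Fintype.card V` vertices, so by
pigeonhole it repeats one, and repeating the cut ends with a walk of fewer than `Fintype.card V`
steps. -/

namespace Walk

variable {V M : Type*} [AddCommMonoid M]

-- A walk of length `k` is encoded by any `P : ℕ → V` whose first `k + 1` values are its
-- vertices, which keeps the index arithmetic of cutting in `ℕ`.
def weight (w : V → V → M) (P : ℕ → V) (k : ℕ) : M :=
  ∑ m ∈ range k, w (P m) (P (m + 1))

theorem weight_add (w : V → V → M) (P : ℕ → V) (a b : ℕ) :
    weight w P (a + b) = weight w P a + weight w (fun n => P (a + n)) b := by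
  simp only [weight, sum_range_add, Nat.add_assoc]

theorem weight_congr (w : V → V → M) {P Q : ℕ → V} {k : ℕ} (h : ∀ n ≤ k, P n = Q n) :
    weight w P k = weight w Q k :=
  sum_congr rfl fun m hm => by
    rw [mem_range] at hm
    rw [h m hm.le, h (m + 1) hm]

theorem sum_fin_eq_weight (w : V → V → M) (P : ℕ → V) (k : ℕ) :
    ∑ i : Fin k, w (P i.castSucc) (P i.succ) = weight w P k := by
  simp only [Fin.val_castSucc, Fin.val_succ]
  exact Fin.sum_univ_eq_sum_range (fun m => w (P m) (P (m + 1))) k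

theorem exists_weight_le_of_eq [PartialOrder M] [CanonicallyOrderedAdd M] {w : V → V → M}
    {P : ℕ → V} {i d : ℕ} (r : ℕ) (hP : P i = P (i + d)) :
    ∃ Q : ℕ → V, Q 0 = P 0 ∧ Q (i + r) = P (i + d + r) ∧
      weight w Q (i + r) ≤ weight w P (i + d + r) := by
  let Q : ℕ → V := fun n => if n < i then P n else P (n + d)
  have hQ_prefix : ∀ n ≤ i, Q n = P n := fun n hn => by
    rcases hn.lt_or_eq with hn | rfl
    · exact if_pos hn
    · exact (if_neg (lt_irrefl n)).trans hP.symm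
  have hQ_suffix : ∀ n, Q (i + n) = P (i + d + n) := fun n => by
    simp only [Q, if_neg (Nat.not_lt.2 (Nat.le_add_right i n))]
    congr 1
    omega
  refine ⟨Q, hQ_prefix 0 (Nat.zero_le i), hQ_suffix r, ?_⟩
  -- prefix + suffix ≤ prefix + closed subwalk + suffix
  rw [weight_add, weight_add, weight_add, weight_congr w hQ_prefix, funext hQ_suffix,
    add_right_comm]
  exact le_self_add

theorem exists_weight_le_of_lt_card [PartialOrder M] [CanonicallyOrderedAdd M] [Fintype V]
    (w : V → V → M) (k : ℕ) (P : ℕ → V) :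
    ∃ k' < Fintype.card V, ∃ Q : ℕ → V, Q 0 = P 0 ∧ Q k' = P k ∧
      weight w Q k' ≤ weight w P k := by
  induction k using Nat.strong_induction_on generalizing P with
  | _ k ih =>
    by_cases hk : k < Fintype.card V
    · exact ⟨k, hk, P, rfl, rfl, le_rfl⟩
    obtain ⟨i, j, hij, hjk, hP⟩ : ∃ i j, i < j ∧ j ≤ k ∧ P i = P j := by
      have hcard : (univ : Finset V).card < (range (k + 1)).card := by
        rw [card_range, card_univ]
        omega
      obtain ⟨a, ha, b, hb, hab, hP⟩ :=
        exists_ne_map_eq_of_card_lt_of_maps_to hcard fun n _ => mem_coe.2 (mem_univ (P n))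
      rw [mem_range] at ha hb
      rcases hab.lt_or_gt with hab | hab
      · exact ⟨a, b, hab, by omega, hP⟩
      · exact ⟨b, a, hab, by omega, hP.symm⟩
    have hk_split : k = i + (j - i) + (k - j) := by omega
    have hP' : P i = P (i + (j - i)) := by rwa [Nat.add_sub_cancel' hij.le]
    obtain ⟨Q, hQ0, hQk, hQ⟩ := exists_weight_le_of_eq (w := w) (k - j) hP'
    rw [← hk_split] at hQk hQ
    obtain ⟨k', hk', R, hR0, hRk, hR⟩ := ih (i + (k - j)) (by omega) Q
    exact ⟨k', hk', R, hR0.trans hQ0, hRk.trans hQk, hR.trans hQ⟩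

end Walk

open Walk

theorem graph_distance_restricted_to_simple_paths {V : Type*} [Fintype V]
    (w : Matrix V V ℝ≥0∞) (u v : V) :
    (⨅ k : ℕ, ⨅ p : {p : Fin (k + 1) → V // p 0 = u ∧ p (Fin.last k) = v},
        ∑ i : Fin k, w (p.1 i.castSucc) (p.1 i.succ)) =
      ⨅ k ∈ Finset.range (Fintype.card V),
        ⨅ p : {p : Fin (k + 1) → V // p 0 = u ∧ p (Fin.last k) = v},
          ∑ i : Fin k, w (p.1 i.castSucc) (p.1 i.succ) := by
  refine le_antisymm (le_iInf₂ fun k _ => iInf_le _ k) (le_iInf fun k => le_iInf fun p => ?_)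
  obtain ⟨p, hp0, hpk⟩ := p
  obtain ⟨P, rfl⟩ : ∃ P : ℕ → V, p = fun i : Fin (k + 1) => P i :=
    ⟨fun n => if h : n < k + 1 then p ⟨n, h⟩ else u, funext fun i => by simp [i.is_le]⟩
  obtain ⟨k', hk', Q, hQ0, hQk, hQ⟩ := exists_weight_le_of_lt_card w k P
  let q : {q : Fin (k' + 1) → V // q 0 = u ∧ q (Fin.last k') = v} :=
    ⟨fun i => Q i, by simp_all⟩
  calc _ ≤ ∑ i : Fin k', w (Q i.castSucc) (Q i.succ) :=
        iInf₂_le_of_le k' (mem_range.2 hk') (iInf_le_of_le q le_rfl)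
    _ = weight w Q k' := sum_fin_eq_weight w Q k'
    _ ≤ weight w P k := hQ
    _ = _ := (sum_fin_eq_weight w P k).symm
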